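/- arXiv:2303.15559 — 7 statements merged into one kernel-verified Lean document; each statement's English description precedes it below -/
import Mathlib

section
/- Fix t with 0 < t < (3 − √3)/3 and define h_t : [0, π/6] → ℝ by h_t(γ) = (cos γ − √((1−t)² − sin²γ)) · sin γ. Then h_t is strictly convex on [0, π/6]. -/
/-!
Write `q = √(r² - sin² γ)` with `r = 1 - t`. Differentiating twice gives
`h'' = sin γ (cos γ - q) (q² (3 cos γ - q) + sin² γ (q + cos γ)) / q³`,
and on the interior of `[0, a]` with `a ≤ π/2`, `sin a ≤ r < 1` every factor is positive:
`0 < sin γ < r` keeps `q > 0`, and `r < 1` gives `q² < 1 - sin² γ = cos² γ`, so `q < cos γ`.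
-/

open Real Set

theorem strictConvexOn_of_hasDerivAt2_pos {D : Set ℝ} (hD : Convex ℝ D) {f f' f'' : ℝ → ℝ}
    (hf : ContinuousOn f D) (hf' : ∀ x ∈ interior D, HasDerivAt f (f' x) x)
    (hf'' : ∀ x ∈ interior D, HasDerivAt f' (f'' x) x) (hf''₀ : ∀ x ∈ interior D, 0 < f'' x) :
    StrictConvexOn ℝ D f := by
  have hmono : StrictMonoOn f' (interior D) :=
    strictMonoOn_of_hasDerivWithinAt_pos hD.interior
      (fun x hx ↦ (hf'' x hx).continuousAt.continuousWithinAt)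
      (fun x hx ↦ (hf'' x (interior_interior (s := D) ▸ hx)).hasDerivWithinAt)
      (fun x hx ↦ hf''₀ x (interior_interior (s := D) ▸ hx))
  refine (hmono.congr fun x hx ↦ ?_).strictConvexOn_of_deriv hD hf
  exact ((hf' x hx).deriv).symm

/-- The ray from the origin at angle `γ` meets the circle of radius `r` about `(1, 0)` at
distances `cos γ ± halfChord r γ`. -/
noncomputable def halfChord (r γ : ℝ) : ℝ := √(r ^ 2 - sin γ ^ 2)

noncomputable def rayCircleHeight (r γ : ℝ) : ℝ := (cos γ - halfChord r γ) * sin γ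

variable {r x : ℝ}

lemma halfChord_pos (hx : sin x ^ 2 < r ^ 2) : 0 < halfChord r x :=
  sqrt_pos.2 (sub_pos.2 hx)

lemma halfChord_lt_cos (hr : r ^ 2 < 1) (hc : 0 < cos x) : halfChord r x < cos x := by
  rw [halfChord, sqrt_lt' hc]
  nlinarith [sin_sq_add_cos_sq x]

lemma hasDerivAt_halfChord (hx : sin x ^ 2 < r ^ 2) :
    HasDerivAt (halfChord r) (-(sin x * cos x) / halfChord r x) x := by
  refine (((hasDerivAt_sin x).pow 2).const_sub (r ^ 2) |>.sqrt (sub_pos.2 hx).ne').congr_deriv ?_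
  simp only [halfChord, Pi.pow_apply]
  ring

lemma continuous_rayCircleHeight (r : ℝ) : Continuous (rayCircleHeight r) := by
  unfold rayCircleHeight halfChord
  fun_prop

noncomputable def rayCircleHeightDeriv (r γ : ℝ) : ℝ :=
  (cos γ - halfChord r γ) * (cos γ + sin γ ^ 2 / halfChord r γ)

lemma hasDerivAt_rayCircleHeight (hx : sin x ^ 2 < r ^ 2) :
    HasDerivAt (rayCircleHeight r) (rayCircleHeightDeriv r x) x := by
  have hq := (halfChord_pos hx).ne'
  refine (((hasDerivAt_cos x).sub (hasDerivAt_halfChord hx)).mul (hasDerivAt_sin x)).congr_deriv ?_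
  simp only [rayCircleHeightDeriv, Pi.sub_apply]
  field_simp
  ring

lemma hasDerivAt_rayCircleHeightDeriv (hx : sin x ^ 2 < r ^ 2) :
    HasDerivAt (rayCircleHeightDeriv r)
      (sin x * (cos x - halfChord r x) *
        (halfChord r x ^ 2 * (3 * cos x - halfChord r x) + sin x ^ 2 * (halfChord r x + cos x)) /
          halfChord r x ^ 3) x := by
  have hq := (halfChord_pos hx).ne'
  have hv := (hasDerivAt_cos x).add (((hasDerivAt_sin x).pow 2).div (hasDerivAt_halfChord hx) hq)
  refine (((hasDerivAt_cos x).sub (hasDerivAt_halfChord hx)).mul hv).congr_deriv ?_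
  simp only [Pi.add_apply, Pi.sub_apply, Pi.div_apply, Pi.pow_apply]
  field_simp
  ring

theorem strictConvexOn_rayCircleHeight {a : ℝ} (hr : r < 1) (ha : a ≤ π / 2) (har : sin a ≤ r) :
    StrictConvexOn ℝ (Icc 0 a) (rayCircleHeight r) := by
  have hsin : ∀ x ∈ interior (Icc 0 a), 0 < sin x ∧ sin x < r ∧ 0 < cos x := by
    rw [interior_Icc]
    rintro x ⟨hx0, hxa⟩
    have hpi := pi_pos
    refine ⟨sin_pos_of_pos_of_lt_pi hx0 (by linarith),
      (sin_lt_sin_of_lt_of_le_pi_div_two (by linarith) ha hxa).trans_le har,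
      cos_pos_of_mem_Ioo ⟨by linarith, by linarith⟩⟩
  have hsq : ∀ x ∈ interior (Icc 0 a), sin x ^ 2 < r ^ 2 := fun x hx ↦
    pow_lt_pow_left₀ (hsin x hx).2.1 (hsin x hx).1.le two_ne_zero
  refine strictConvexOn_of_hasDerivAt2_pos (convex_Icc 0 a)
    (continuous_rayCircleHeight r).continuousOn (fun x hx ↦ hasDerivAt_rayCircleHeight (hsq x hx))
    (fun x hx ↦ hasDerivAt_rayCircleHeightDeriv (hsq x hx)) fun x hx ↦ ?_
  obtain ⟨hs, hsr, hc⟩ := hsin x hx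
  have hq := halfChord_pos (hsq x hx)
  have hqc : halfChord r x < cos x := halfChord_lt_cos (by nlinarith) hc
  have h3 : 0 < 3 * cos x - halfChord r x := by linarith
  exact div_pos (mul_pos (mul_pos hs (sub_pos.2 hqc))
    (add_pos (mul_pos (pow_pos hq 2) h3) (mul_pos (pow_pos hs 2) (add_pos hq hc)))) (pow_pos hq 3)

/-- For fixed `t ∈ (0, (3-√3)/3)`, the height function
`h_t(γ) = (cos γ − √((1−t)² − sin²γ)) · sin γ` is strictly convex on `[0, π/6]`. -/
theorem ht_strictConvexOn (t : ℝ) (ht0 : 0 < t) (ht1 : t < (3 - Real.sqrt 3) / 3) :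
    StrictConvexOn ℝ (Set.Icc 0 (π / 6))
      (fun γ : ℝ => (Real.cos γ - Real.sqrt ((1 - t) ^ 2 - Real.sin γ ^ 2)) * Real.sin γ) := by
  have h3 : 3 / 2 < √3 := by rw [lt_sqrt] <;> norm_num
  refine strictConvexOn_rayCircleHeight (by linarith) (by linarith [pi_pos]) ?_
  rw [sin_pi_div_six]
  linarith
end

section
/- Fix t with 0 < t < (3 − √3)/3 and define h_t : [0, π/6] → ℝ by h_t(γ) = (cos γ − √((1−t)² − sin²γ)) · sin γ. Then h_t is strictly increasing on [0, π/6]. -/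
open Real Set

/-- For fixed `t ∈ (0, (3-√3)/3)`, the height function
`h_t(γ) = (cos γ − √((1−t)² − sin²γ)) · sin γ` is strictly increasing on `[0, π/6]`. -/
theorem ht_strictMonoOn (t : ℝ) (ht0 : 0 < t) (ht1 : t < (3 - Real.sqrt 3) / 3) :
    StrictMonoOn
      (fun γ : ℝ => (Real.cos γ - Real.sqrt ((1 - t) ^ 2 - Real.sin γ ^ 2)) * Real.sin γ)
      (Set.Icc 0 (π / 6)) := by
  set r : ℝ := 1 - t with hr
  have hs3 : (3:ℝ)/2 < Real.sqrt 3 := by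
    nlinarith [Real.sq_sqrt (show (0:ℝ) ≤ 3 by norm_num), Real.sqrt_nonneg 3]
  have hrhalf : (1:ℝ)/2 < r := by
    simp only [hr]; linarith
  have hr1 : r < 1 := by simp only [hr]; linarith
  have hr2 : 0 < 1 - r^2 := by nlinarith
  have hpi := Real.pi_pos
  -- key rewriting
  have key : ∀ γ : ℝ, 0 ≤ γ → γ ≤ π/6 →
      (Real.cos γ - Real.sqrt (r ^ 2 - Real.sin γ ^ 2)) * Real.sin γ
        = (1 - r^2) * (Real.sin γ / (Real.cos γ + Real.sqrt (r ^ 2 - Real.sin γ ^ 2))) := by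
    intro γ h0 h6
    have hsle : Real.sin γ ≤ 1/2 := by
      have := (Real.strictMonoOn_sin.monotoneOn)
        (show γ ∈ Set.Icc (-(π/2)) (π/2) by constructor <;> [linarith; linarith])
        (show π/6 ∈ Set.Icc (-(π/2)) (π/2) by constructor <;> [linarith; linarith]) h6
      rwa [Real.sin_pi_div_six] at this
    have hs0 : 0 ≤ Real.sin γ := Real.sin_nonneg_of_nonneg_of_le_pi h0 (by linarith)
    have harg : 0 ≤ r ^ 2 - Real.sin γ ^ 2 := by nlinarith
    have hq : Real.sqrt (r ^ 2 - Real.sin γ ^ 2) ^ 2 = r ^ 2 - Real.sin γ ^ 2 :=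
      Real.sq_sqrt harg
    have hqnn : 0 ≤ Real.sqrt (r ^ 2 - Real.sin γ ^ 2) := Real.sqrt_nonneg _
    have hc : 0 < Real.cos γ :=
      Real.cos_pos_of_mem_Ioo ⟨by linarith, by linarith⟩
    have hden : 0 < Real.cos γ + Real.sqrt (r ^ 2 - Real.sin γ ^ 2) := by linarith
    have hpyth := Real.sin_sq_add_cos_sq γ
    field_simp
    nlinarith [hq, hpyth]
  intro a ha b hb hab
  obtain ⟨ha0, ha6⟩ := ha
  obtain ⟨hb0, hb6⟩ := hb
  simp only
  rw [key a ha0 ha6, key b hb0 hb6]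
  have hsab : Real.sin a < Real.sin b :=
    Real.strictMonoOn_sin ⟨by linarith, by linarith⟩ ⟨by linarith, by linarith⟩ hab
  have hsa0 : 0 ≤ Real.sin a := Real.sin_nonneg_of_nonneg_of_le_pi ha0 (by linarith)
  have hsbb : Real.sin b ≤ 1/2 := by
    have := (Real.strictMonoOn_sin.monotoneOn)
      (show b ∈ Set.Icc (-(π/2)) (π/2) by constructor <;> [linarith; linarith])
      (show π/6 ∈ Set.Icc (-(π/2)) (π/2) by constructor <;> [linarith; linarith]) hb6
    rwa [Real.sin_pi_div_six] at this
  have hcab : Real.cos b ≤ Real.cos a :=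
    (Real.strictAntiOn_cos ⟨ha0, by linarith⟩ ⟨hb0, by linarith⟩ hab).le
  have hca : 0 < Real.cos a := Real.cos_pos_of_mem_Ioo ⟨by linarith, by linarith⟩
  have hcb : 0 < Real.cos b := Real.cos_pos_of_mem_Ioo ⟨by linarith, by linarith⟩
  have hqab : Real.sqrt (r ^ 2 - Real.sin b ^ 2) ≤ Real.sqrt (r ^ 2 - Real.sin a ^ 2) :=
    Real.sqrt_le_sqrt (by nlinarith)
  have hqbn : 0 ≤ Real.sqrt (r ^ 2 - Real.sin b ^ 2) := Real.sqrt_nonneg _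
  set Da := Real.cos a + Real.sqrt (r ^ 2 - Real.sin a ^ 2) with hDa
  set Db := Real.cos b + Real.sqrt (r ^ 2 - Real.sin b ^ 2) with hDb
  have hDa0 : 0 < Da := by simp only [hDa]; positivity
  have hDb0 : 0 < Db := by simp only [hDb]; positivity
  have hDba : Db ≤ Da := by simp only [hDa, hDb]; linarith
  have : Real.sin a / Da < Real.sin b / Db := by
    rw [div_lt_div_iff₀ hDa0 hDb0]
    calc Real.sin a * Db ≤ Real.sin a * Da := mul_le_mul_of_nonneg_left hDba hsa0
      _ < Real.sin b * Da := mul_lt_mul_of_pos_right hsab hDa0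
  exact mul_lt_mul_of_pos_left this hr2
end

section
/- Fix t with 0 < t < (3 − √3)/3 and define α_t : [0, π/6] → ℝ by α_t(γ) = arcsin(h_t(γ)/(1−t)), where h_t(γ) = (cos γ − √((1−t)² − sin²γ)) · sin γ. Then α_t is strictly increasing and strictly convex on [0, π/6]. -/
/-!
Write `r = 1 - t`. Then `α_t` inverts `g(β) = arctan (r sin β / (1 - r cos β))`, the angle at `A`
of the point of the circle seen from `B` at angle `β`. Since
`g'(β) = r (cos β - r) / (1 + r² - 2 r cos β)` is positive for `β < arccos r` and decreasing in
`β`, `g` is strictly increasing and strictly concave on `[0, arccos r]`, so its inverse is strictly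
increasing and strictly convex on `[0, arcsin r]`. Finally `t < (3 - √3)/3` gives
`r > 1/2 = sin (π/6)`.
-/

open Real Set

section LeftInverse

variable {𝕜 E β : Type*} {s : Set E} {t : Set β} {f : E → β} {g : β → E}

theorem StrictMonoOn.strictMonoOn_of_leftInvOn [Preorder E] [LinearOrder β]
    (hg : StrictMonoOn g t) (hf : MapsTo f s t) (hgf : LeftInvOn g f s) : StrictMonoOn f s := by
  intro x hx y hy hxy
  rwa [← hg.lt_iff_lt (hf hx) (hf hy), hgf hx, hgf hy]

theorem StrictConcaveOn.strictConvexOn_of_leftInvOn [Semiring 𝕜] [PartialOrder 𝕜]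
    [AddCommMonoid E] [PartialOrder E] [SMul 𝕜 E] [AddCommMonoid β] [LinearOrder β] [SMul 𝕜 β]
    (hs : Convex 𝕜 s) (hg : StrictConcaveOn 𝕜 t g) (hg_mono : StrictMonoOn g t)
    (hf : MapsTo f s t) (hgf : LeftInvOn g f s) : StrictConvexOn 𝕜 s f := by
  refine ⟨hs, fun x hx y hy hxy a b ha hb hab => ?_⟩
  have hfxy : f x ≠ f y := fun h => hxy (by rw [← hgf hx, ← hgf hy, h])
  have hz := hs hx hy ha.le hb.le hab
  have hlt := hg.2 (hf hx) (hf hy) hfxy ha hb hab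
  rw [hgf hx, hgf hy, ← hgf hz] at hlt
  exact (hg_mono.lt_iff_lt (hf hz) (hg.1 (hf hx) (hf hy) ha.le hb.le hab)).1 hlt

end LeftInverse

/- For the circle of radius `r` centred at `B = (1, 0)`: `rayCircleDist r γ` is the distance from
the origin `A` to the nearer point `C` where the ray from `A` at angle `γ` meets the circle, and
`angleAtCentre r γ` is the angle `∠CBA`. Conversely, `angleAtOrigin r β` is the angle at `A` of the
point `C = (1 - r cos β, r sin β)` with `∠CBA = β`. -/
noncomputable def rayCircleDist (r γ : ℝ) : ℝ := cos γ - √(r ^ 2 - sin γ ^ 2)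

noncomputable def angleAtCentre (r γ : ℝ) : ℝ := arcsin (rayCircleDist r γ * sin γ / r)

noncomputable def angleAtOrigin (r β : ℝ) : ℝ := arctan (r * sin β / (1 - r * cos β))

section angleAtOrigin

variable {r : ℝ}

theorem hasDerivAt_angleAtOrigin (hr : |r| < 1) (β : ℝ) :
    HasDerivAt (angleAtOrigin r) (r * (cos β - r) / (1 + r ^ 2 - 2 * r * cos β)) β := by
  have hden : 0 < 1 - r * cos β := by
    have : |r * cos β| < 1 := by
      rw [abs_mul]; nlinarith [abs_cos_le_one β, abs_nonneg r, abs_nonneg (cos β)]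
    linarith [le_abs_self (r * cos β)]
  have hnum : HasDerivAt (fun β => r * sin β) (r * cos β) β := (hasDerivAt_sin β).const_mul r
  have hden' : HasDerivAt (fun β => 1 - r * cos β) (r * sin β) β := by
    simpa using ((hasDerivAt_cos β).const_mul r).const_sub 1
  refine ((hasDerivAt_arctan _).comp β (hnum.div hden' hden.ne')).congr_deriv ?_
  have hpyth := sin_sq_add_cos_sq β
  have hD_ne : 1 + r ^ 2 - r * cos β * 2 ≠ 0 := by nlinarith
  simp only [Pi.div_apply]
  field_simp
  linear_combination (-(r ^ 2) * (1 + r ^ 2 - 2 * r * cos β + r * (cos β - r))) * hpyth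

theorem deriv_angleAtOrigin (hr : |r| < 1) :
    deriv (angleAtOrigin r) = fun β => r * (cos β - r) / (1 + r ^ 2 - 2 * r * cos β) :=
  funext fun β => (hasDerivAt_angleAtOrigin hr β).deriv

theorem continuous_angleAtOrigin (hr : |r| < 1) : Continuous (angleAtOrigin r) :=
  continuous_iff_continuousAt.2 fun β => (hasDerivAt_angleAtOrigin hr β).continuousAt

theorem strictMonoOn_angleAtOrigin (hr0 : 0 < r) (hr1 : r < 1) :
    StrictMonoOn (angleAtOrigin r) (Icc 0 (arccos r)) := by
  have hr : |r| < 1 := abs_lt.2 ⟨by linarith, hr1⟩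
  refine strictMonoOn_of_deriv_pos (convex_Icc _ _)
    (continuous_angleAtOrigin hr).continuousOn fun β hβ => ?_
  rw [interior_Icc] at hβ
  have hcos : r < cos β := by
    simpa [cos_arccos (by linarith) hr1.le] using
      strictAntiOn_cos ⟨hβ.1.le, hβ.2.le.trans (arccos_le_pi r)⟩
        ⟨hβ.1.le.trans hβ.2.le, arccos_le_pi r⟩ hβ.2
  rw [deriv_angleAtOrigin hr]
  exact div_pos (mul_pos hr0 (by linarith)) (by nlinarith [cos_le_one β])

theorem strictConcaveOn_angleAtOrigin (hr0 : 0 < r) (hr1 : r < 1) :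
    StrictConcaveOn ℝ (Icc 0 π) (angleAtOrigin r) := by
  have hr : |r| < 1 := abs_lt.2 ⟨by linarith, hr1⟩
  refine StrictAntiOn.strictConcaveOn_of_deriv (convex_Icc _ _)
    (continuous_angleAtOrigin hr).continuousOn ?_
  rw [deriv_angleAtOrigin hr, interior_Icc]
  intro β₁ hβ₁ β₂ hβ₂ hβ
  have hcos := strictAntiOn_cos (Ioo_subset_Icc_self hβ₁) (Ioo_subset_Icc_self hβ₂) hβ
  have hD₁ : 0 < 1 + r ^ 2 - 2 * r * cos β₁ := by nlinarith [cos_le_one β₁]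
  have hD₂ : 0 < 1 + r ^ 2 - 2 * r * cos β₂ := by nlinarith [cos_le_one β₂]
  rw [div_lt_div_iff₀ hD₂ hD₁]
  -- the derivative is a Möbius function of `cos β`, increasing since `r (1 - r²) > 0`
  nlinarith [mul_pos (mul_pos hr0 (by nlinarith : 0 < 1 - r ^ 2)) (sub_pos.2 hcos)]

end angleAtOrigin

section rayCircleDist

variable {r γ : ℝ}

theorem rayCircleDist_on_circle (hs : sin γ ^ 2 ≤ r ^ 2) :
    (1 - rayCircleDist r γ * cos γ) ^ 2 + (rayCircleDist r γ * sin γ) ^ 2 = r ^ 2 := by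
  have hS := sq_sqrt (sub_nonneg.2 hs)
  unfold rayCircleDist
  linear_combination ((cos γ - √(r ^ 2 - sin γ ^ 2)) ^ 2 - 1) * sin_sq_add_cos_sq γ + hS

theorem rayCircleDist_pos (hs : sin γ ^ 2 ≤ r ^ 2) (hr : r ^ 2 < 1) (hc : 0 ≤ cos γ) :
    0 < rayCircleDist r γ := by
  have hlt : r ^ 2 - sin γ ^ 2 < cos γ ^ 2 := by linarith [sin_sq_add_cos_sq γ]
  have := sqrt_lt_sqrt (sub_nonneg.2 hs) hlt
  rw [sqrt_sq hc] at this
  exact sub_pos.2 this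

theorem rayCircleDist_mul_cos_le (hs : sin γ ^ 2 ≤ r ^ 2) (hρ : 0 ≤ rayCircleDist r γ) :
    rayCircleDist r γ * cos γ ≤ 1 - r ^ 2 := by
  have hS := sq_sqrt (sub_nonneg.2 hs)
  unfold rayCircleDist at hρ ⊢
  -- `1 - r² - ρ cos γ = ρ √(r² - sin² γ)`
  nlinarith [mul_nonneg hρ (sqrt_nonneg (r ^ 2 - sin γ ^ 2)), sin_sq_add_cos_sq γ]

end rayCircleDist

section angleAtCentre

variable {r γ : ℝ}

theorem sin_mem_Icc_of_mem_Icc_arcsin (hr : r ≤ 1) (hγ : γ ∈ Icc 0 (arcsin r)) :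
    sin γ ∈ Icc 0 r := by
  have hr0 : 0 ≤ r := arcsin_nonneg.1 (hγ.1.trans hγ.2)
  have hγπ : γ ≤ π / 2 := hγ.2.trans (arcsin_le_pi_div_two r)
  exact ⟨sin_nonneg_of_nonneg_of_le_pi hγ.1 (by linarith [pi_pos]),
    (le_arcsin_iff_sin_le ⟨by linarith [pi_pos, hγ.1], hγπ⟩ ⟨by linarith, hr⟩).1 hγ.2⟩

theorem sin_sq_le_sq_of_mem_Icc_arcsin (hr : r ≤ 1) (hγ : γ ∈ Icc 0 (arcsin r)) :
    sin γ ^ 2 ≤ r ^ 2 :=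
  have hs := sin_mem_Icc_of_mem_Icc_arcsin hr hγ
  pow_le_pow_left₀ hs.1 hs.2 2

theorem cos_nonneg_of_mem_Icc_arcsin (hγ : γ ∈ Icc 0 (arcsin r)) : 0 ≤ cos γ :=
  cos_nonneg_of_mem_Icc ⟨by linarith [pi_pos, hγ.1], hγ.2.trans (arcsin_le_pi_div_two r)⟩

theorem rayCircleDist_pos_of_mem_Icc_arcsin (hr0 : 0 < r) (hr1 : r < 1)
    (hγ : γ ∈ Icc 0 (arcsin r)) : 0 < rayCircleDist r γ :=
  rayCircleDist_pos (sin_sq_le_sq_of_mem_Icc_arcsin hr1.le hγ) (by nlinarith)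
    (cos_nonneg_of_mem_Icc_arcsin hγ)

theorem sin_angleAtCentre (hr0 : 0 < r) (hr1 : r < 1) (hγ : γ ∈ Icc 0 (arcsin r)) :
    sin (angleAtCentre r γ) = rayCircleDist r γ * sin γ / r := by
  have hs := sin_mem_Icc_of_mem_Icc_arcsin hr1.le hγ
  have hρ := rayCircleDist_pos_of_mem_Icc_arcsin hr0 hr1 hγ
  have hcirc := rayCircleDist_on_circle (sin_sq_le_sq_of_mem_Icc_arcsin hr1.le hγ)
  have hle : rayCircleDist r γ * sin γ ≤ r := by
    nlinarith [sq_nonneg (1 - rayCircleDist r γ * cos γ)]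
  refine sin_arcsin ?_ ((div_le_one hr0).2 hle)
  have : 0 ≤ rayCircleDist r γ * sin γ / r := by have := hs.1; positivity
  linarith

theorem cos_angleAtCentre (hr0 : 0 < r) (hr1 : r < 1) (hγ : γ ∈ Icc 0 (arcsin r)) :
    cos (angleAtCentre r γ) = (1 - rayCircleDist r γ * cos γ) / r := by
  have hs := sin_sq_le_sq_of_mem_Icc_arcsin hr1.le hγ
  have hle := rayCircleDist_mul_cos_le hs (rayCircleDist_pos_of_mem_Icc_arcsin hr0 hr1 hγ).le
  have hcirc := rayCircleDist_on_circle hs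
  have h1 : 1 - (rayCircleDist r γ * sin γ / r) ^ 2 = ((1 - rayCircleDist r γ * cos γ) / r) ^ 2 := by
    field_simp
    linear_combination -hcirc
  rw [angleAtCentre, cos_arcsin, h1, sqrt_sq (div_nonneg (by nlinarith) hr0.le)]

theorem angleAtCentre_mem_Icc (hr0 : 0 < r) (hr1 : r < 1) (hγ : γ ∈ Icc 0 (arcsin r)) :
    angleAtCentre r γ ∈ Icc 0 (arccos r) := by
  have hs := sin_mem_Icc_of_mem_Icc_arcsin hr1.le hγ
  have hρ := rayCircleDist_pos_of_mem_Icc_arcsin hr0 hr1 hγ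
  have hα0 : 0 ≤ angleAtCentre r γ := arcsin_nonneg.2 (by have := hs.1; positivity)
  refine ⟨hα0, ?_⟩
  have hcos : r ≤ cos (angleAtCentre r γ) := by
    rw [cos_angleAtCentre hr0 hr1 hγ, le_div_iff₀ hr0]
    nlinarith [rayCircleDist_mul_cos_le (sin_sq_le_sq_of_mem_Icc_arcsin hr1.le hγ) hρ.le]
  calc angleAtCentre r γ = arccos (cos (angleAtCentre r γ)) :=
        (arccos_cos hα0 ((arcsin_le_pi_div_two _).trans (by linarith [pi_pos]))).symm
    _ ≤ arccos r := arccos_le_arccos hcos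

theorem angleAtOrigin_angleAtCentre (hr0 : 0 < r) (hr1 : r < 1) (hγ : γ ∈ Icc 0 (arcsin r)) :
    angleAtOrigin r (angleAtCentre r γ) = γ := by
  have hρ := rayCircleDist_pos_of_mem_Icc_arcsin hr0 hr1 hγ
  have hγπ : γ < π / 2 := hγ.2.trans_lt (arcsin_lt_pi_div_two.2 hr1)
  have hc : 0 < cos γ := cos_pos_of_mem_Ioo ⟨by linarith [pi_pos, hγ.1], hγπ⟩
  have htan : r * (rayCircleDist r γ * sin γ / r) / (1 - r * ((1 - rayCircleDist r γ * cos γ) / r))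
      = tan γ := by
    rw [tan_eq_sin_div_cos]
    field_simp
    ring
  rw [angleAtOrigin, sin_angleAtCentre hr0 hr1 hγ, cos_angleAtCentre hr0 hr1 hγ, htan,
    arctan_tan (by linarith [pi_pos, hγ.1]) hγπ]

theorem strictMonoOn_angleAtCentre (hr0 : 0 < r) (hr1 : r < 1) :
    StrictMonoOn (angleAtCentre r) (Icc 0 (arcsin r)) :=
  (strictMonoOn_angleAtOrigin hr0 hr1).strictMonoOn_of_leftInvOn
    (fun _ hγ => angleAtCentre_mem_Icc hr0 hr1 hγ)
    (fun _ hγ => angleAtOrigin_angleAtCentre hr0 hr1 hγ)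

theorem strictConvexOn_angleAtCentre (hr0 : 0 < r) (hr1 : r < 1) :
    StrictConvexOn ℝ (Icc 0 (arcsin r)) (angleAtCentre r) :=
  ((strictConcaveOn_angleAtOrigin hr0 hr1).subset
      (Icc_subset_Icc_right (arccos_le_pi r)) (convex_Icc _ _)).strictConvexOn_of_leftInvOn
    (convex_Icc _ _) (strictMonoOn_angleAtOrigin hr0 hr1)
    (fun _ hγ => angleAtCentre_mem_Icc hr0 hr1 hγ)
    (fun _ hγ => angleAtOrigin_angleAtCentre hr0 hr1 hγ)

end angleAtCentre

/-- For fixed `t ∈ (0, (3-√3)/3)`, the angle function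
`α_t(γ) = arcsin(h_t(γ)/(1−t))`, where `h_t(γ) = (cos γ − √((1−t)² − sin²γ)) · sin γ`,
is strictly increasing and strictly convex on `[0, π/6]`. -/
theorem alpha_strictMono_strictConvex (t : ℝ) (ht0 : 0 < t) (ht1 : t < (3 - Real.sqrt 3) / 3) :
    StrictMonoOn
      (fun γ : ℝ => Real.arcsin
        (((Real.cos γ - Real.sqrt ((1 - t) ^ 2 - Real.sin γ ^ 2)) * Real.sin γ) / (1 - t)))
      (Set.Icc 0 (π / 6)) ∧
    StrictConvexOn ℝ (Set.Icc 0 (π / 6))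
      (fun γ : ℝ => Real.arcsin
        (((Real.cos γ - Real.sqrt ((1 - t) ^ 2 - Real.sin γ ^ 2)) * Real.sin γ) / (1 - t))) := by
  have hsqrt3 : 3 / 2 < √3 := by
    nlinarith [sq_sqrt (show (0 : ℝ) ≤ 3 by norm_num), sqrt_nonneg 3]
  have hr0 : 0 < 1 - t := by linarith
  have hr1 : 1 - t < 1 := by linarith
  have hsub : Icc 0 (π / 6) ⊆ Icc 0 (arcsin (1 - t)) := by
    refine Icc_subset_Icc_right ((le_arcsin_iff_sin_le ?_ ?_).2 ?_)
    · constructor <;> linarith [pi_pos]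
    · constructor <;> linarith
    · rw [sin_pi_div_six]; linarith
  exact ⟨(strictMonoOn_angleAtCentre hr0 hr1).mono hsub,
    (strictConvexOn_angleAtCentre hr0 hr1).subset hsub (convex_Icc _ _)⟩
end

section
/- Fix t with 0 < t < (3 − √3)/3 and define α_t : [0, π/6] → ℝ by α_t(γ) = arcsin(h_t(γ)/(1−t)), where h_t(γ) = (cos γ − √((1−t)² − sin²γ)) · sin γ. Then α_t(γ) ≤ γ for all γ ∈ [0, π/6]. -/
open Real Set

/-- For fixed `t ∈ (0, (3-√3)/3)` and `γ ∈ [0, π/6]`, the angle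
`α_t(γ) = arcsin(h_t(γ)/(1−t))`, where `h_t(γ) = (cos γ − √((1−t)² − sin²γ)) · sin γ`,
satisfies `α_t(γ) ≤ γ`. -/
theorem alpha_le_gamma (t : ℝ) (ht0 : 0 < t) (ht1 : t < (3 - Real.sqrt 3) / 3)
    (γ : ℝ) (hγ : γ ∈ Set.Icc 0 (π / 6)) :
    Real.arcsin
      (((Real.cos γ - Real.sqrt ((1 - t) ^ 2 - Real.sin γ ^ 2)) * Real.sin γ) / (1 - t)) ≤ γ := by
  obtain ⟨hγ0, hγ6⟩ := hγ
  have hpi := Real.pi_pos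
  have hs3 : Real.sqrt 3 ^ 2 = 3 := Real.sq_sqrt (by norm_num)
  have hs3pos : (0:ℝ) < Real.sqrt 3 := Real.sqrt_pos.2 (by norm_num)
  have hs3lt : Real.sqrt 3 < 2 := by nlinarith
  have hr : Real.sqrt 3 / 3 < 1 - t := by linarith
  have hrpos : 0 < 1 - t := by linarith
  have hγpi : γ ≤ π := by linarith
  have hc : Real.sqrt 3 / 2 ≤ Real.cos γ := by
    rw [← Real.cos_pi_div_six]
    exact Real.cos_le_cos_of_nonneg_of_le_pi hγ0 (by linarith) hγ6
  have hsnn : 0 ≤ Real.sin γ := Real.sin_nonneg_of_nonneg_of_le_pi hγ0 hγpi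
  have hpyth : Real.sin γ ^ 2 + Real.cos γ ^ 2 = 1 := Real.sin_sq_add_cos_sq γ
  have hc1 : Real.cos γ ≤ 1 := Real.cos_le_one γ
  have hinner : (0:ℝ) ≤ (1 - t) ^ 2 - Real.sin γ ^ 2 := by nlinarith
  set q := Real.sqrt ((1 - t) ^ 2 - Real.sin γ ^ 2) with hq
  have hqnn : 0 ≤ q := Real.sqrt_nonneg _
  have hqsq : q ^ 2 = (1 - t) ^ 2 - Real.sin γ ^ 2 := Real.sq_sqrt hinner
  have h2rc : 1 ≤ 2 * (1 - t) * Real.cos γ := by nlinarith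
  have hkey : Real.cos γ - q ≤ 1 - t := by nlinarith [sq_nonneg (Real.cos γ - (1 - t) - q)]
  have hx : ((Real.cos γ - q) * Real.sin γ) / (1 - t) ≤ Real.sin γ := by
    rw [div_le_iff₀ hrpos]
    nlinarith
  calc Real.arcsin (((Real.cos γ - q) * Real.sin γ) / (1 - t))
      ≤ Real.arcsin (Real.sin γ) := Real.monotone_arcsin hx
    _ = γ := Real.arcsin_sin (by linarith) (by linarith)
end

section
/- Let N ≥ 1 and let f : ℝ → ℝ be convex and monotone nondecreasing on [0, π/3] with f(0) = 0. If β₀, …, β_{N−1} ∈ [0, π/3] satisfy β₀ + ⋯ + β_{N−1} ≤ π, then f(β₀) + ⋯ + f(β_{N−1}) ≤ 3 f(π/3). -/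
open Real Set

/-- If `f` is convex, nondecreasing on `[0, π/3]` with `f 0 = 0`, and the angles
`β i ∈ [0, π/3]` sum to at most `π`, then `∑ f (β i) ≤ 3 f(π/3)`. -/
theorem sum_f_le_three_f (N : ℕ) (hN : 1 ≤ N) (f : ℝ → ℝ)
    (hconv : ConvexOn ℝ (Set.Icc 0 (π / 3)) f)
    (hmono : MonotoneOn f (Set.Icc 0 (π / 3)))
    (hf0 : f 0 = 0)
    (β : Fin N → ℝ) (hβ : ∀ i, β i ∈ Set.Icc 0 (π / 3))
    (hsum : ∑ i, β i ≤ π) :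
    ∑ i, f (β i) ≤ 3 * f (π / 3) := by
  have hπ : (0:ℝ) < π := Real.pi_pos
  have hπ3 : (0:ℝ) < π / 3 := by positivity
  have hfπ3 : 0 ≤ f (π / 3) := by
    have := hmono (Set.mem_Icc.mpr ⟨le_refl 0, le_of_lt hπ3⟩)
      (Set.mem_Icc.mpr ⟨le_of_lt hπ3, le_refl _⟩) (le_of_lt hπ3)
    linarith [this]
  -- linear bound from convexity
  have key : ∀ i, f (β i) ≤ (3 / π) * β i * f (π / 3) := by
    intro i
    obtain ⟨h0, h1⟩ := Set.mem_Icc.mp (hβ i)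
    set t : ℝ := (3 / π) * β i with ht
    have ht0 : 0 ≤ t := by positivity
    have ht1 : t ≤ 1 := by
      rw [ht, div_mul_eq_mul_div, div_le_one hπ]
      linarith
    have hx : β i = (1 - t) • (0:ℝ) + t • (π / 3) := by
      simp only [smul_eq_mul, mul_zero, zero_add, ht]
      field_simp
    have := hconv.2 (Set.mem_Icc.mpr ⟨le_refl 0, le_of_lt hπ3⟩)
      (Set.mem_Icc.mpr ⟨le_of_lt hπ3, le_refl _⟩)
      (by linarith : (0:ℝ) ≤ 1 - t) ht0 (by ring)
    rw [← hx] at this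
    simpa [hf0] using this
  calc ∑ i, f (β i) ≤ ∑ i, (3 / π) * β i * f (π / 3) :=
        Finset.sum_le_sum fun i _ => key i
    _ = (3 / π) * (∑ i, β i) * f (π / 3) := by
        rw [Finset.mul_sum, Finset.sum_mul]
    _ ≤ (3 / π) * π * f (π / 3) := by
        apply mul_le_mul_of_nonneg_right _ hfπ3
        exact mul_le_mul_of_nonneg_left hsum (by positivity)
    _ = 3 * f (π / 3) := by field_simp
end

section
/- Let R be the Reuleaux triangle of width 1. For every t ∈ [0, 1 − √3/3], the perimeter of the inner parallel set of R at distance t equals (1 − t)(π − 6 α_t(π/6)), i.e. μH¹(frontier R_{-t}) = (1 − t)(π − 6 arcsin(h_t(π/6)/(1−t))), where h_t(γ) = (cos γ − √((1−t)² − sin²γ)) · sin γ. -/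
open MeasureTheory Metric Real Set
open scoped ENNReal

noncomputable section

/-- The Euclidean plane ℝ². -/
abbrev Plane := EuclideanSpace ℝ (Fin 2)

/-- Point of the plane with given coordinates. -/
def pt (a b : ℝ) : Plane := (EuclideanSpace.equiv (Fin 2) ℝ).symm ![a, b]

/-- A convex body: compact, convex, with nonempty interior. -/
def IsConvexBody (K : Set Plane) : Prop :=
  IsCompact K ∧ Convex ℝ K ∧ (interior K).Nonempty

/-- `K` has constant width 1: in every direction `u` of norm one, the width of `K` is 1. -/
def HasConstantWidth1 (K : Set Plane) : Prop :=
  ∀ u : Plane, ‖u‖ = 1 →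
    sSup ((fun x => (inner ℝ x u : ℝ)) '' K) - sInf ((fun x => (inner ℝ x u : ℝ)) '' K) = 1

/-- The Reuleaux triangle of width 1. -/
def ReuleauxTriangle : Set Plane :=
  closedBall (pt 0 0) 1 ∩ closedBall (pt 1 0) 1 ∩ closedBall (pt (1/2) (Real.sqrt 3 / 2)) 1

/-- The inner parallel set of `Ω` at distance `t`. -/
def innerParallel (Ω : Set Plane) (t : ℝ) : Set Plane :=
  {x : Plane | closedBall x t ⊆ Ω}

/-- The Cheeger constant of `Ω`: infimum of perimeter/area ratios over convex bodies in `Ω`. -/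
def cheeger (Ω : Set Plane) : ℝ≥0∞ :=
  ⨅ (E : Set Plane) (_ : IsConvexBody E) (_ : E ⊆ Ω), μH[1] (frontier E) / volume E

/-- The inradius of `K`: supremum of radii of closed balls contained in `K`. -/
def inradius (K : Set Plane) : ℝ :=
  sSup {r : ℝ | 0 ≤ r ∧ ∃ x : Plane, closedBall x r ⊆ K}

/-!
Identify `ℝ²` with `ℂ`, so that the Reuleaux triangle is the intersection of the closed unit disks
about `0`, `1` and `apex = e^{iπ/3}`. As `closedBall x t ⊆ closedBall z r ↔ t + dist x z ≤ r`, the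
inner parallel set at distance `t` is the intersection of the disks of radius `ρ = 1 - t` about the
same vertices. Its frontier is the union of three arcs, permuted by the rotation
`z ↦ 1 + e^{2iπ/3} z` and meeting in finitely many points; the arc centred at `0` is
`{ρ e^{iφ} : π/3 - c ≤ φ ≤ c}` with `c = arccos (1 / (2ρ))`.

An arc of radius `ρ` and angle `θ < 2π` has one-dimensional Hausdorff measure `ρ θ`: `circleMap` is
`ρ`-Lipschitz, and conversely the arc is at least as long as each inscribed polygon, because a
preconnected set is at least as long as the distance between any two of its points. Hence the
perimeter is `3 ρ (2c - π/3)`, and `α_t(π/6) = π/3 - c` turns this into the claimed formula.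
-/

open Filter Topology Complex

section CurveLength

variable {X : Type*} [MetricSpace X] [MeasurableSpace X] [BorelSpace X]

theorem IsPreconnected.ofReal_dist_le_hausdorffMeasure {s : Set X} (hs : IsPreconnected s)
    {x y : X} (hx : x ∈ s) (hy : y ∈ s) : ENNReal.ofReal (dist x y) ≤ μH[1] s := by
  have hIcc : Icc 0 (dist x y) ⊆ dist x '' s :=
    (hs.image _ (LipschitzWith.dist_right x).continuous.continuousOn).Icc_subset
      ⟨x, hx, dist_self x⟩ ⟨y, hy, rfl⟩
  calc ENNReal.ofReal (dist x y) = μH[1] (Icc 0 (dist x y)) := by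
        rw [hausdorffMeasure_real, Real.volume_Icc, sub_zero]
    _ ≤ μH[1] (dist x '' s) := measure_mono hIcc
    _ ≤ μH[1] s := by
        simpa using (LipschitzWith.dist_right x).hausdorffMeasure_image_le zero_le_one s

theorem ofReal_sum_dist_le_hausdorffMeasure_image {f : ℝ → X} {a b : ℝ}
    (hf : ContinuousOn f (Icc a b)) (hinj : InjOn f (Icc a b)) {u : ℕ → ℝ} (hu : Monotone u)
    {n : ℕ} (ha : a ≤ u 0) (hb : u n ≤ b) :
    ENNReal.ofReal (∑ j ∈ Finset.range n, dist (f (u j)) (f (u (j + 1)))) ≤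
      μH[1] (f '' Icc a b) := by
  have := Measure.nullSingletonClass_hausdorff X one_pos
  have hsub : ∀ j ∈ Finset.range n, Icc (u j) (u (j + 1)) ⊆ Icc a b := fun j hj =>
    Icc_subset_Icc (ha.trans (hu j.zero_le)) ((hu (Finset.mem_range.mp hj)).trans hb)
  have hside : ∀ j ∈ Finset.range n,
      ENNReal.ofReal (dist (f (u j)) (f (u (j + 1)))) ≤ μH[1] (f '' Ico (u j) (u (j + 1))) := by
    intro j hj
    have hle : u j ≤ u (j + 1) := hu j.le_succ
    calc ENNReal.ofReal (dist (f (u j)) (f (u (j + 1))))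
        ≤ μH[1] (f '' Icc (u j) (u (j + 1))) :=
          (isPreconnected_Icc.image f (hf.mono (hsub j hj))).ofReal_dist_le_hausdorffMeasure
            ⟨_, left_mem_Icc.2 hle, rfl⟩ ⟨_, right_mem_Icc.2 hle, rfl⟩
      _ = μH[1] (f '' Ico (u j) (u (j + 1))) := by
          rw [← Ico_insert_right hle, image_insert_eq]
          exact measure_congr (insert_ae_eq_self _ _)
  have hdisj : (Finset.range n : Set ℕ).PairwiseDisjoint fun j ↦ f '' Ico (u j) (u (j + 1)) :=
    fun i hi j hj hij ↦ (hu.pairwise_disjoint_on_Ico_succ hij).image hinj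
      (Ico_subset_Icc_self.trans (hsub i hi)) (Ico_subset_Icc_self.trans (hsub j hj))
  have hmeas : ∀ j ∈ Finset.range n, MeasurableSet (f '' Ico (u j) (u (j + 1))) := fun j hj ↦
    measurableSet_Ico.image_of_continuousOn_injOn
      (hf.mono (Ico_subset_Icc_self.trans (hsub j hj)))
      (hinj.mono (Ico_subset_Icc_self.trans (hsub j hj)))
  calc ENNReal.ofReal (∑ j ∈ Finset.range n, dist (f (u j)) (f (u (j + 1))))
      = ∑ j ∈ Finset.range n, ENNReal.ofReal (dist (f (u j)) (f (u (j + 1)))) :=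
        ENNReal.ofReal_sum_of_nonneg fun _ _ ↦ dist_nonneg
    _ ≤ ∑ j ∈ Finset.range n, μH[1] (f '' Ico (u j) (u (j + 1))) := Finset.sum_le_sum hside
    _ = μH[1] (⋃ j ∈ Finset.range n, f '' Ico (u j) (u (j + 1))) :=
        (measure_biUnion_finset hdisj hmeas).symm
    _ ≤ μH[1] (f '' Icc a b) := measure_mono <| iUnion₂_subset fun j hj ↦
        image_mono (Ico_subset_Icc_self.trans (hsub j hj))

end CurveLength

section CircleArc

theorem dist_circleMap_circleMap (c : ℂ) {R : ℝ} (hR : 0 ≤ R) (θ θ' : ℝ) :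
    dist (circleMap c R θ) (circleMap c R θ') = 2 * R * |Real.sin ((θ - θ') / 2)| := by
  have h : circleMap c R θ - circleMap c R θ' =
      R * Complex.exp (θ' * I) * (Complex.exp (I * ↑(θ - θ')) - 1) := by
    simp only [circleMap, mul_sub, mul_assoc, ← Complex.exp_add]
    push_cast
    ring_nf
  rw [dist_eq_norm, h, norm_mul, norm_mul, norm_exp_ofReal_mul_I, norm_exp_I_mul_ofReal_sub_one,
    Complex.norm_of_nonneg hR, Real.norm_eq_abs, abs_mul, abs_two]
  ring

theorem hausdorffMeasure_circleMap_image_Icc_le (c : ℂ) {R : ℝ} (hR : 0 ≤ R) (a b : ℝ) :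
    μH[1] (circleMap c R '' Icc a b) ≤ ENNReal.ofReal (R * (b - a)) :=
  calc μH[1] (circleMap c R '' Icc a b) ≤ (Real.nnabs R : ℝ≥0∞) ^ (1 : ℝ) * μH[1] (Icc a b) :=
        (lipschitzWith_circleMap c R).hausdorffMeasure_image_le zero_le_one _
    _ = ENNReal.ofReal (R * (b - a)) := by
        rw [ENNReal.rpow_one, hausdorffMeasure_real, Real.volume_Icc, ENNReal.ofReal_mul hR,
          Real.nnabs_of_nonneg hR]
        rfl

theorem two_mul_sin_half_eq_mul_sinc (x : ℝ) : 2 * Real.sin (x / 2) = x * Real.sinc (x / 2) := by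
  rcases eq_or_ne x 0 with rfl | hx
  · simp
  · rw [Real.sinc_of_ne_zero (by positivity)]
    field_simp

theorem ofReal_le_hausdorffMeasure_circleMap_image_Icc (c : ℂ) {R a b : ℝ} (hR : 0 < R)
    (hab : a ≤ b) (hba : b - a < 2 * π) :
    ENNReal.ofReal (R * (b - a)) ≤ μH[1] (circleMap c R '' Icc a b) := by
  have hinj : InjOn (circleMap c R) (Icc a b) := fun x hx y hy h ↦
    eq_of_circleMap_eq hR.ne'
      (abs_sub_lt_iff.2 ⟨by linarith [hx.2, hy.1], by linarith [hx.1, hy.2]⟩) h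
  -- the inscribed regular polygon with `n` sides
  have hpolygon : ∀ n : ℕ, 1 ≤ n →
      ENNReal.ofReal (R * (b - a) * Real.sinc ((b - a) / n / 2)) ≤
        μH[1] (circleMap c R '' Icc a b) := by
    intro n hn
    have hn₀ : (n : ℝ) ≠ 0 := by positivity
    set h := (b - a) / n with h_def
    have hh : 0 ≤ h := div_nonneg (sub_nonneg.2 hab) n.cast_nonneg
    have hh' : h ≤ b - a := div_le_self (sub_nonneg.2 hab) (by exact_mod_cast hn)
    have hside : ∀ j : ℕ, dist (circleMap c R (a + j * h)) (circleMap c R (a + (j + 1 : ℕ) * h)) =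
        R * h * Real.sinc (h / 2) := by
      intro j
      rw [dist_circleMap_circleMap c hR.le, show (a + j * h - (a + (j + 1 : ℕ) * h)) / 2 = -(h / 2)
        by push_cast; ring, Real.sin_neg, abs_neg,
        abs_of_nonneg (Real.sin_nonneg_of_nonneg_of_le_pi (by positivity) (by linarith))]
      linear_combination R * two_mul_sin_half_eq_mul_sinc h
    convert ofReal_sum_dist_le_hausdorffMeasure_image (continuous_circleMap c R).continuousOn hinj
      (u := fun j : ℕ ↦ a + j * h) (fun i j hij ↦ by dsimp only; gcongr) (n := n) (by simp) ?_
      using 2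
    · simp only [hside, Finset.sum_const, Finset.card_range, nsmul_eq_mul]
      rw [h_def]
      field_simp
    · simp only [h_def, mul_div_cancel₀ _ hn₀, add_sub_cancel, le_refl]
  have hlim : Tendsto (fun n : ℕ ↦ R * (b - a) * Real.sinc ((b - a) / n / 2)) atTop
      (𝓝 (R * (b - a))) := by
    have h0 : Tendsto (fun n : ℕ ↦ (b - a) / n / 2) atTop (𝓝 0) := by
      simpa using (tendsto_const_div_atTop_nhds_zero_nat (b - a)).div_const 2
    simpa using ((Real.continuous_sinc.tendsto 0).comp h0).const_mul (R * (b - a))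
  exact le_of_tendsto (ENNReal.tendsto_ofReal hlim) (eventually_atTop.2 ⟨1, hpolygon⟩)

theorem hausdorffMeasure_circleMap_image_Icc (c : ℂ) {R a b : ℝ} (hR : 0 < R)
    (hba : b - a < 2 * π) :
    μH[1] (circleMap c R '' Icc a b) = ENNReal.ofReal (R * (b - a)) := by
  rcases lt_or_ge b a with hlt | hab
  · rw [Icc_eq_empty_of_lt hlt, image_empty, measure_empty,
      ENNReal.ofReal_of_nonpos (mul_nonpos_of_nonneg_of_nonpos hR.le (by linarith))]
  · exact (hausdorffMeasure_circleMap_image_Icc_le c hR.le a b).antisymm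
      (ofReal_le_hausdorffMeasure_circleMap_image_Icc c hR hab hba)

end CircleArc

theorem finite_sphere_inter_sphere {V : Type*} [NormedAddCommGroup V] [InnerProductSpace ℝ V]
    [FiniteDimensional ℝ V] (hd : Module.finrank ℝ V = 2) {c₁ c₂ : V} (hc : c₁ ≠ c₂)
    (r₁ r₂ : ℝ) : (sphere c₁ r₁ ∩ sphere c₂ r₂).Finite := by
  rcases (sphere c₁ r₁ ∩ sphere c₂ r₂).subsingleton_or_nontrivial with hs | ⟨p₁, hp₁, p₂, hp₂, hp⟩
  · exact hs.finite
  · exact (toFinite {p₁, p₂}).subset fun p hp' ↦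
      EuclideanGeometry.eq_of_dist_eq_of_dist_eq_of_finrank_eq_two hd hc hp
        hp₁.1 hp₂.1 hp'.1 hp₁.2 hp₂.2 hp'.2

theorem frontier_inter_inter_of_isClosed {X : Type*} [TopologicalSpace X] {A B C : Set X}
    (hA : IsClosed A) (hB : IsClosed B) (hC : IsClosed C) :
    frontier (A ∩ B ∩ C) = frontier A ∩ B ∩ C ∪ frontier B ∩ C ∩ A ∪ frontier C ∩ A ∩ B := by
  rw [((hA.inter hB).inter hC).frontier_eq, hA.frontier_eq, hB.frontier_eq, hC.frontier_eq,
    interior_inter, interior_inter]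
  ext x
  simp only [Set.mem_sdiff, mem_inter_iff, mem_union]
  tauto

theorem measure_union_union₀ {α : Type*} [MeasurableSpace α] {μ : Measure α} {s t u : Set α}
    (ht : NullMeasurableSet t μ) (hu : NullMeasurableSet u μ) (hst : AEDisjoint μ s t)
    (hsu : AEDisjoint μ s u) (htu : AEDisjoint μ t u) :
    μ (s ∪ t ∪ u) = μ s + μ t + μ u := by
  rw [measure_union₀ hu (hsu.union_left htu), measure_union₀ ht hst]

theorem le_cos_iff_abs_le_arccos {x y : ℝ} (hx : |x| ≤ π) (hy₁ : -1 ≤ y) (hy₂ : y ≤ 1) :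
    y ≤ Real.cos x ↔ |x| ≤ arccos y := by
  rw [← Real.cos_abs x]
  constructor
  · intro h
    calc |x| = arccos (Real.cos |x|) := (arccos_cos (abs_nonneg x) hx).symm
      _ ≤ arccos y := arccos_le_arccos h
  · intro h
    calc y = Real.cos (arccos y) := (cos_arccos hy₁ hy₂).symm
      _ ≤ Real.cos |x| := cos_le_cos_of_nonneg_of_le_pi (abs_nonneg x) (arccos_le_pi y) h

theorem circleMap_mem_closedBall_circleMap_iff {ρ : ℝ} (hρ : 0 ≤ ρ) (φ ψ : ℝ) :
    circleMap 0 ρ φ ∈ closedBall (circleMap 0 1 ψ) ρ ↔ 1 ≤ 2 * ρ * Real.cos (φ - ψ) := by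
  have hdist :
      dist (circleMap 0 ρ φ) (circleMap 0 1 ψ) ^ 2 = ρ ^ 2 + 1 - 2 * ρ * Real.cos (φ - ψ) := by
    rw [Complex.dist_eq, Complex.sq_norm, normSq_apply]
    simp only [sub_re, sub_im, circleMap_zero_re, circleMap_zero_im, Real.cos_sub]
    linear_combination ρ ^ 2 * Real.sin_sq_add_cos_sq φ + Real.sin_sq_add_cos_sq ψ
  rw [mem_closedBall, ← pow_le_pow_iff_left₀ dist_nonneg hρ two_ne_zero, hdist]
  constructor <;> intro h <;> linarith

theorem closedBall_subset_closedBall_iff {E : Type*} [NormedAddCommGroup E] [NormedSpace ℝ E]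
    [Nontrivial E] {x z : E} {t r : ℝ} (ht : 0 ≤ t) :
    closedBall x t ⊆ closedBall z r ↔ t + dist x z ≤ r := by
  refine ⟨fun h ↦ ?_, closedBall_subset_closedBall'⟩
  -- `x + t • v` is the point of `closedBall x t` farthest from `z`
  obtain ⟨v, hv, hray⟩ : ∃ v : E, ‖v‖ = 1 ∧ SameRay ℝ (x - z) v := by
    rcases eq_or_ne x z with rfl | hxz
    · obtain ⟨v, hv⟩ := exists_norm_eq E zero_le_one
      exact ⟨v, hv, by simp⟩
    · refine ⟨‖x - z‖⁻¹ • (x - z), norm_smul_inv_norm (sub_ne_zero.2 hxz), ?_⟩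
      exact SameRay.sameRay_nonneg_smul_right _ (by positivity)
  have hmem : x + t • v ∈ closedBall x t := by
    simp [dist_eq_norm, norm_smul, hv, abs_of_nonneg ht]
  have hfar := h hmem
  rw [mem_closedBall, dist_eq_norm, add_sub_right_comm, (hray.nonneg_smul_right ht).norm_add,
    norm_smul, hv, Real.norm_of_nonneg ht, ← dist_eq_norm] at hfar
  linarith

def apex : ℂ := circleMap 0 1 (π / 3)

@[simp] theorem apex_re : apex.re = 1 / 2 := by simp [apex, circleMap_zero_re]
@[simp] theorem apex_im : apex.im = √3 / 2 := by simp [apex, circleMap_zero_im]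

theorem one_div_two_mul_mem_Ioc {ρ : ℝ} (hρ : 1 / 2 ≤ ρ) : 1 / (2 * ρ) ∈ Ioc 0 1 :=
  ⟨by positivity, (div_le_one (by positivity)).2 (by linarith)⟩

def reuleauxArc (ρ : ℝ) : Set ℂ := sphere 0 ρ ∩ closedBall 1 ρ ∩ closedBall apex ρ

theorem reuleauxArc_eq_image {ρ : ℝ} (hρ : 1 / 2 ≤ ρ) :
    reuleauxArc ρ = circleMap 0 ρ '' Icc (π / 3 - arccos (1 / (2 * ρ))) (arccos (1 / (2 * ρ))) := by
  set c := arccos (1 / (2 * ρ))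
  have hρ₀ : 0 < ρ := by linarith
  obtain ⟨hy₀, hy₁⟩ := one_div_two_mul_mem_Ioc hρ
  have hc : c < π / 2 := arccos_lt_pi_div_two.2 hy₀
  have hc₀ : 0 ≤ c := arccos_nonneg _
  have hmem : ∀ φ ψ, |φ - ψ| ≤ π →
      (circleMap 0 ρ φ ∈ closedBall (circleMap 0 1 ψ) ρ ↔ |φ - ψ| ≤ c) := by
    intro φ ψ h
    rw [circleMap_mem_closedBall_circleMap_iff hρ₀.le,
      ← le_cos_iff_abs_le_arccos h (by linarith) hy₁, div_le_iff₀ (by positivity), mul_comm]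
  have hone : (1 : ℂ) = circleMap 0 1 0 := by simp [circleMap]
  rw [reuleauxArc, hone, apex]
  ext z
  constructor
  · rintro ⟨⟨hz, hz₁⟩, hz₂⟩
    have hz' : circleMap 0 ρ (arg z) = z := by
      rw [mem_sphere_zero_iff_norm] at hz
      rw [circleMap_zero, ← hz, norm_mul_exp_arg_mul_I z]
    rw [← hz'] at hz₁ hz₂
    have h₁ := abs_le.1 ((hmem _ 0 (by simpa using abs_arg_le_pi z)).1 hz₁)
    have h₂ := abs_le.1 ((hmem _ (π / 3) (abs_le.2 ⟨by linarith, by linarith⟩)).1 hz₂)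
    exact ⟨arg z, ⟨by linarith, by linarith⟩, hz'⟩
  · rintro ⟨φ, ⟨hφ₁, hφ₂⟩, rfl⟩
    refine ⟨⟨circleMap_mem_sphere _ hρ₀.le _, (hmem _ _ ?_).2 ?_⟩, (hmem _ _ ?_).2 ?_⟩ <;>
      rw [abs_le] <;> constructor <;> linarith

def rotateVertices : ℂ ≃ᵢ ℂ :=
  (rotation (Circle.exp (2 * π / 3))).toIsometryEquiv.trans (IsometryEquiv.addLeft 1)

theorem rotateVertices_apply (z : ℂ) : rotateVertices z = 1 + circleMap 0 1 (2 * π / 3) * z := by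
  simp [rotateVertices, circleMap]

@[simp] theorem rotateVertices_zero : rotateVertices 0 = 1 := by simp [rotateVertices_apply]

@[simp] theorem rotateVertices_one : rotateVertices 1 = apex := by
  have h : 2 * π / 3 = π - π / 3 := by ring
  apply Complex.ext <;>
    simp [rotateVertices_apply, apex, circleMap_zero_re, circleMap_zero_im, h, Real.cos_pi_sub,
      Real.sin_pi_sub]
  norm_num

@[simp] theorem rotateVertices_apex : rotateVertices apex = 0 := by
  rw [rotateVertices_apply, apex, circleMap_zero_mul, show 2 * π / 3 + π / 3 = π by ring]
  simp [circleMap]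

theorem image_rotateVertices_reuleauxArc (ρ : ℝ) :
    rotateVertices '' reuleauxArc ρ = sphere 1 ρ ∩ closedBall apex ρ ∩ closedBall 0 ρ := by
  simp only [reuleauxArc, image_inter rotateVertices.injective, rotateVertices.image_sphere,
    rotateVertices.image_closedBall, rotateVertices_zero, rotateVertices_one, rotateVertices_apex]

theorem image_rotateVertices_image_reuleauxArc (ρ : ℝ) :
    rotateVertices '' (rotateVertices '' reuleauxArc ρ) =
      sphere apex ρ ∩ closedBall 0 ρ ∩ closedBall 1 ρ := by
  simp only [image_rotateVertices_reuleauxArc, image_inter rotateVertices.injective,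
    rotateVertices.image_sphere, rotateVertices.image_closedBall, rotateVertices_zero,
    rotateVertices_one, rotateVertices_apex]

def reuleauxInter (ρ : ℝ) : Set ℂ := closedBall 0 ρ ∩ closedBall 1 ρ ∩ closedBall apex ρ

theorem frontier_reuleauxInter {ρ : ℝ} (hρ : ρ ≠ 0) :
    frontier (reuleauxInter ρ) = reuleauxArc ρ ∪ rotateVertices '' reuleauxArc ρ ∪
      rotateVertices '' (rotateVertices '' reuleauxArc ρ) := by
  rw [reuleauxInter, frontier_inter_inter_of_isClosed isClosed_closedBall isClosed_closedBall
    isClosed_closedBall, frontier_closedBall _ hρ, frontier_closedBall _ hρ,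
    frontier_closedBall _ hρ, image_rotateVertices_image_reuleauxArc,
    image_rotateVertices_reuleauxArc, reuleauxArc]

theorem hausdorffMeasure_sphere_inter_sphere {c₁ c₂ : ℂ} (hc : c₁ ≠ c₂) (r₁ r₂ : ℝ) :
    μH[1] (sphere c₁ r₁ ∩ sphere c₂ r₂) = 0 :=
  have := Measure.nullSingletonClass_hausdorff ℂ one_pos
  (finite_sphere_inter_sphere Complex.finrank_real_complex hc r₁ r₂).measure_zero _

theorem hausdorffMeasure_frontier_reuleauxInter {ρ : ℝ} (hρ : 1 / 2 ≤ ρ) :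
    μH[1] (frontier (reuleauxInter ρ)) = ENNReal.ofReal (ρ * (6 * arccos (1 / (2 * ρ)) - π)) := by
  have hρ₀ : 0 < ρ := by linarith
  have hc : arccos (1 / (2 * ρ)) < π / 2 := arccos_lt_pi_div_two.2 (by positivity)
  have hclosed : ∀ c c' c'' : ℂ, IsClosed (sphere c ρ ∩ closedBall c' ρ ∩ closedBall c'' ρ) :=
    fun _ _ _ ↦ (isClosed_sphere.inter isClosed_closedBall).inter isClosed_closedBall
  have h01 : (0 : ℂ) ≠ 1 := zero_ne_one
  have h0a : (0 : ℂ) ≠ apex := fun h ↦ by simpa using congrArg Complex.re h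
  have h1a : (1 : ℂ) ≠ apex := fun h ↦ by norm_num [Complex.ext_iff] at h
  have hunion : μH[1] (frontier (reuleauxInter ρ)) = μH[1] (reuleauxArc ρ) +
      μH[1] (rotateVertices '' reuleauxArc ρ) +
      μH[1] (rotateVertices '' (rotateVertices '' reuleauxArc ρ)) := by
    rw [frontier_reuleauxInter hρ₀.ne', image_rotateVertices_image_reuleauxArc,
      image_rotateVertices_reuleauxArc, reuleauxArc]
    refine measure_union_union₀ (hclosed _ _ _).nullMeasurableSet
      (hclosed _ _ _).nullMeasurableSet ?_ ?_ ?_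
    · refine measure_mono_null ?_ (hausdorffMeasure_sphere_inter_sphere h01 ρ ρ)
      exact fun z hz ↦ ⟨hz.1.1.1, hz.2.1.1⟩
    · refine measure_mono_null ?_ (hausdorffMeasure_sphere_inter_sphere h0a ρ ρ)
      exact fun z hz ↦ ⟨hz.1.1.1, hz.2.1.1⟩
    · refine measure_mono_null ?_ (hausdorffMeasure_sphere_inter_sphere h1a ρ ρ)
      exact fun z hz ↦ ⟨hz.1.1.1, hz.2.1.1⟩
  simp only [hunion, rotateVertices.hausdorffMeasure_image]
  rw [reuleauxArc_eq_image hρ, hausdorffMeasure_circleMap_image_Icc 0 hρ₀ (by linarith [pi_pos])]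
  calc _ = ENNReal.ofReal 3 * ENNReal.ofReal (ρ * (arccos (1 / (2 * ρ)) -
        (π / 3 - arccos (1 / (2 * ρ))))) := by rw [ENNReal.ofReal_ofNat]; ring
    _ = _ := by rw [← ENNReal.ofReal_mul zero_le_three]; ring_nf

theorem innerParallel_inter (A B : Set Plane) (t : ℝ) :
    innerParallel (A ∩ B) t = innerParallel A t ∩ innerParallel B t := by
  ext x
  simp only [innerParallel, mem_ofPred_eq, mem_inter_iff, subset_inter_iff]

theorem innerParallel_closedBall (z : Plane) (r : ℝ) {t : ℝ} (ht : 0 ≤ t) :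
    innerParallel (closedBall z r) t = closedBall z (r - t) := by
  ext x
  rw [innerParallel, mem_ofPred_eq, closedBall_subset_closedBall_iff ht, mem_closedBall]
  constructor <;> intro h <;> linarith

def complexEquivPlane : ℂ ≃ᵢ Plane := Complex.orthonormalBasisOneI.repr.toIsometryEquiv

theorem complexEquivPlane_apply (z : ℂ) : complexEquivPlane z = pt z.re z.im := rfl

theorem innerParallel_reuleauxTriangle {t : ℝ} (ht : 0 ≤ t) :
    innerParallel ReuleauxTriangle t = complexEquivPlane '' reuleauxInter (1 - t) := by
  simp only [ReuleauxTriangle, reuleauxInter, innerParallel_inter, innerParallel_closedBall _ _ ht,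
    image_inter complexEquivPlane.injective, complexEquivPlane.image_closedBall,
    complexEquivPlane_apply, zero_re, zero_im, one_re, one_im, apex_re, apex_im]

theorem arcsin_eq_pi_div_three_sub_arccos {ρ : ℝ} (hρ : 1 / 2 ≤ ρ) :
    arcsin (((Real.cos (π / 6) - √(ρ ^ 2 - Real.sin (π / 6) ^ 2)) * Real.sin (π / 6)) / ρ) =
      π / 3 - arccos (1 / (2 * ρ)) := by
  have hρ₀ : 0 < ρ := by linarith
  have hy := one_div_two_mul_mem_Ioc hρ
  have hc : arccos (1 / (2 * ρ)) ≤ π / 2 := arccos_le_pi_div_two.2 hy.1.le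
  have hsqrt : √(1 - (1 / (2 * ρ)) ^ 2) = √(ρ ^ 2 - (1 / 2) ^ 2) / ρ := by
    rw [show 1 - (1 / (2 * ρ)) ^ 2 = (ρ ^ 2 - (1 / 2) ^ 2) / ρ ^ 2 by field_simp,
      Real.sqrt_div' _ (sq_nonneg ρ), Real.sqrt_sq hρ₀.le]
  have hsin : ((Real.cos (π / 6) - √(ρ ^ 2 - Real.sin (π / 6) ^ 2)) * Real.sin (π / 6)) / ρ =
      Real.sin (π / 3 - arccos (1 / (2 * ρ))) := by
    rw [Real.cos_pi_div_six, Real.sin_pi_div_six, Real.sin_sub, Real.sin_pi_div_three,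
      Real.cos_pi_div_three, cos_arccos (by linarith [hy.1]) hy.2, Real.sin_arccos, hsqrt]
    field_simp
  have hc₀ := arccos_nonneg (1 / (2 * ρ))
  rw [hsin, arcsin_sin (by linarith [pi_pos]) (by linarith)]

/-- The perimeter of the inner parallel set of the Reuleaux triangle at distance
`t ∈ [0, 1 − √3/3]` equals `(1 − t)(π − 6 α_t(π/6))`, where
`α_t(γ) = arcsin(h_t(γ)/(1−t))` and `h_t(γ) = (cos γ − √((1−t)² − sin²γ)) · sin γ`. -/
theorem perimeter_innerParallel_reuleaux (t : ℝ)
    (ht : t ∈ Set.Icc 0 (1 - Real.sqrt 3 / 3)) :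
    μH[1] (frontier (innerParallel ReuleauxTriangle t)) =
      ENNReal.ofReal ((1 - t) * (π - 6 * Real.arcsin
        (((Real.cos (π / 6) - Real.sqrt ((1 - t) ^ 2 - Real.sin (π / 6) ^ 2)) *
          Real.sin (π / 6)) / (1 - t)))) := by
  obtain ⟨ht₀, ht₁⟩ := ht
  have hρ : 1 / 2 ≤ 1 - t := by
    nlinarith [Real.sq_sqrt (zero_le_three (α := ℝ)), Real.sqrt_nonneg 3]
  rw [innerParallel_reuleauxTriangle ht₀, ← complexEquivPlane.coe_toHomeomorph,
    ← Homeomorph.image_frontier, complexEquivPlane.coe_toHomeomorph,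
    complexEquivPlane.hausdorffMeasure_image,
    hausdorffMeasure_frontier_reuleauxInter hρ, arcsin_eq_pi_div_three_sub_arccos hρ]
  ring_nf
end
end

section
/- Every convex body Ω in ℝ² of constant width 1 has inradius at least 1 − √3/3, and the Reuleaux triangle R of width 1 has inradius exactly 1 − √3/3; that is, the Reuleaux triangle minimizes the inradius among planar shapes of constant width 1. -/
open MeasureTheory Metric Real Set
open scoped ENNReal

noncomputable section

/-!
By Jung's theorem in the plane, a set of diameter at most 1 lies in a closed ball of radius
`√3/3`. A body of constant width 1 has diameter 1, and it is diametrically complete: a point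
`y` at distance at most 1 from all of `Ω` lies in `Ω`, since a direction separating `y` from `Ω`
would see a width larger than 1. Hence the ball of radius `1 - √3/3` concentric to the Jung ball
lies in `Ω`.

For Jung's theorem, let `c` minimize the distance `r` to the farthest point of `S`. Then `c` is a
limit of convex combinations of farthest points (otherwise moving `c` towards them decreases `r`),
and for a convex combination `∑ wᵢ zᵢ` of `m ≤ n + 1` (Carathéodory) points at distance `r` from `c` the
identity `∑ wᵢ ‖zᵢ - c‖² = ‖∑ wᵢ zᵢ - c‖² + ½ ∑ wᵢ wⱼ ‖zᵢ - zⱼ‖²` gives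
`r² ≤ (m - 1) / (2m) · d²` up to an error that can be made arbitrarily small.

The Reuleaux triangle is the intersection of the unit disks centred at the vertices of an
equilateral triangle of circumradius `√3/3`. Every point is at distance at least `√3/3` from some
vertex, so no disk of radius larger than `1 - √3/3` fits, while the one at the centre does.
-/

open scoped RealInnerProductSpace

lemma IsCompact.exists_forall_le_of_forall_lt {α : Type*} [TopologicalSpace α] {K : Set α}
    (hK : IsCompact K) {f : α → ℝ} (hf : ContinuousOn f K) {r : ℝ} (h : ∀ x ∈ K, f x < r) :
    ∃ r' < r, ∀ x ∈ K, f x ≤ r' := by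
  rcases K.eq_empty_or_nonempty with rfl | hne
  · exact ⟨r - 1, by linarith, by simp⟩
  · obtain ⟨x, hx, hmax⟩ := hK.exists_isMaxOn hne hf
    exact ⟨f x, h x hx, hmax⟩

section FarthestDist

variable {α : Type*} [PseudoMetricSpace α] {S : Set α}

def farthestDist (S : Set α) (c : α) : ℝ := sSup (dist c '' S)

lemma dist_le_farthestDist (hS : Bornology.IsBounded S) (c : α) {x : α} (hx : x ∈ S) :
    dist c x ≤ farthestDist S c := by
  obtain ⟨R, hR⟩ := hS.subset_closedBall c
  refine le_csSup ⟨R, ?_⟩ (mem_image_of_mem _ hx)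
  rintro _ ⟨y, hy, rfl⟩
  exact dist_comm c y ▸ hR hy

lemma farthestDist_le (hne : S.Nonempty) {c : α} {r : ℝ} (h : ∀ x ∈ S, dist c x ≤ r) :
    farthestDist S c ≤ r :=
  csSup_le (hne.image _) (forall_mem_image.2 h)

lemma IsCompact.exists_dist_eq_farthestDist (hS : IsCompact S) (hne : S.Nonempty) (c : α) :
    ∃ x ∈ S, dist c x = farthestDist S c :=
  (hS.image (continuous_const.dist continuous_id)).sSup_mem (hne.image _)

lemma farthestDist_le_add_dist (hS : Bornology.IsBounded S) (hne : S.Nonempty) (c c' : α) :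
    farthestDist S c ≤ farthestDist S c' + dist c c' :=
  farthestDist_le hne fun x hx => calc
    dist c x ≤ dist c' x + dist c c' := by linarith [dist_triangle c c' x, dist_comm c c']
    _ ≤ farthestDist S c' + dist c c' := by gcongr; exact dist_le_farthestDist hS c' hx

lemma exists_forall_farthestDist_le [ProperSpace α] (hS : Bornology.IsBounded S)
    (hne : S.Nonempty) : ∃ c, ∀ c', farthestDist S c ≤ farthestDist S c' := by
  obtain ⟨x₀, hx₀⟩ := hne
  have : Nonempty α := ⟨x₀⟩
  refine Continuous.exists_forall_le
    (LipschitzWith.of_le_add (farthestDist_le_add_dist hS ⟨x₀, hx₀⟩)).continuous ?_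
  exact Filter.tendsto_atTop_mono (fun c => dist_le_farthestDist hS c hx₀)
    (tendsto_dist_right_cocompact_atTop x₀)

end FarthestDist

section InnerProductSpace

variable {E : Type*} [NormedAddCommGroup E] [InnerProductSpace ℝ E]

lemma exists_norm_eq_one_inner_eq_norm [Nontrivial E] (v : E) :
    ∃ u : E, ‖u‖ = 1 ∧ ⟪v, u⟫ = ‖v‖ := by
  rcases eq_or_ne v 0 with rfl | hv
  · obtain ⟨u, hu⟩ := exists_norm_eq E zero_le_one
    exact ⟨u, hu, by simp⟩
  · refine ⟨‖v‖⁻¹ • v, norm_smul_inv_norm hv, ?_⟩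
    rw [real_inner_smul_right, real_inner_self_eq_norm_sq]
    field_simp

lemma dist_add_le_of_closedBall_subset [Nontrivial E] {x y : E} {r s : ℝ} (hr : 0 ≤ r)
    (h : closedBall x r ⊆ closedBall y s) : dist x y + r ≤ s := by
  obtain ⟨u, hu, hxy⟩ := exists_norm_eq_one_inner_eq_norm (x - y)
  have hmem : x + r • u ∈ closedBall x r := by
    simp [norm_smul, hu, abs_of_nonneg hr]
  calc dist x y + r = ⟪x + r • u - y, u⟫ := by
        rw [add_sub_right_comm, inner_add_left, hxy, real_inner_smul_left,
          real_inner_self_eq_norm_sq, hu, dist_eq_norm]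
        ring
    _ ≤ ‖x + r • u - y‖ * ‖u‖ := real_inner_le_norm _ _
    _ ≤ s := by rw [hu, mul_one, ← dist_eq_norm]; exact h hmem

lemma Convex.exists_unit_separating [CompleteSpace E] {K : Set E} (hK : Convex ℝ K)
    (hcl : IsClosed K) (hne : K.Nonempty) {y : E} (hy : y ∉ K) :
    ∃ (u : E) (ε : ℝ), ‖u‖ = 1 ∧ 0 < ε ∧ ∀ x ∈ K, ε ≤ ⟪x - y, u⟫ := by
  obtain ⟨f, s, hfy, hfs⟩ := geometric_hahn_banach_point_closed hK hcl hy
  set v := (InnerProductSpace.toDual ℝ E).symm f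
  have hv : ∀ x, ⟪v, x⟫ = f x := fun x => InnerProductSpace.toDual_symm_apply
  obtain ⟨x₀, hx₀⟩ := hne
  have hv0 : v ≠ 0 := fun h0 => by
    have h1 := hfs x₀ hx₀
    simp only [← hv, h0, inner_zero_left] at h1 hfy
    linarith
  have hnorm : 0 < ‖v‖ := norm_pos_iff.2 hv0
  refine ⟨‖v‖⁻¹ • v, (s - f y) / ‖v‖, norm_smul_inv_norm hv0,
    div_pos (by linarith [hfs x₀ hx₀]) hnorm, fun x hx => ?_⟩
  rw [real_inner_smul_right, real_inner_comm, inner_sub_right, hv, hv, inv_mul_eq_div]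
  exact div_le_div_of_nonneg_right (by linarith [hfs x hx]) hnorm.le

lemma exists_le_dist_of_sum_sub_eq_zero {ι : Type*} [Fintype ι] [Nonempty ι] {v : ι → E}
    {c : E} {ρ : ℝ} (hv : ∀ i, dist (v i) c = ρ) (hsum : ∑ i, (v i - c) = 0) (x : E) :
    ∃ i, ρ ≤ dist x (v i) := by
  by_contra! h
  have hneg : ∀ i, ⟪v i - c, c - x⟫ < 0 := by
    intro i
    have hexp : dist x (v i) ^ 2 = ρ ^ 2 + 2 * ⟪v i - c, c - x⟫ + dist c x ^ 2 := by
      rw [← hv i, dist_eq_norm, dist_eq_norm, dist_eq_norm, ← norm_neg (x - v i),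
        show -(x - v i) = (v i - c) + (c - x) by abel, norm_add_sq_real]
    have := h i
    nlinarith [dist_nonneg (x := x) (y := v i), sq_nonneg (dist c x)]
  have hzero : ∑ i, ⟪v i - c, c - x⟫ = 0 := by rw [← sum_inner, hsum, inner_zero_left]
  linarith [Finset.sum_neg (fun i _ => hneg i) Finset.univ_nonempty]

lemma exists_farthestDist_lt {S : Set E} (hS : IsCompact S) (hne : S.Nonempty) {c u : E}
    (hu : ‖u‖ = 1) {ε : ℝ} (hε : 0 < ε)
    (hF : ∀ x ∈ S, dist c x = farthestDist S c → ε ≤ ⟪x - c, u⟫) :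
    ∃ c', farthestDist S c' < farthestDist S c := by
  set r := farthestDist S c
  have hr : ∀ x ∈ S, dist c x ≤ r := fun x hx => dist_le_farthestDist hS.isBounded c hx
  -- points of `S` lying little in direction `u` are uniformly closer to `c` than `r`
  obtain ⟨r', hr'r, hr'⟩ : ∃ r' < r, ∀ x ∈ S ∩ {x | ⟪x - c, u⟫ ≤ ε / 2}, dist c x ≤ r' :=
    (hS.inter_right (isClosed_le (by fun_prop) continuous_const)).exists_forall_le_of_forall_lt
      (by fun_prop) fun x ⟨hxS, (hx : ⟪x - c, u⟫ ≤ ε / 2)⟩ =>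
        (hr x hxS).lt_of_ne fun h => by linarith [hF x hxS h]
  set δ := min (ε / 2) ((r - r') / 2)
  have hδ : 0 < δ := lt_min (by linarith) (by linarith)
  refine ⟨c + δ • u, ?_⟩
  obtain ⟨x, hxS, hx⟩ := hS.exists_dist_eq_farthestDist hne (c + δ • u)
  rw [← hx]
  by_cases hxu : ⟪x - c, u⟫ ≤ ε / 2
  · calc dist (c + δ • u) x ≤ dist (c + δ • u) c + dist c x := dist_triangle _ _ _
      _ ≤ δ + r' := by
          rw [dist_self_add_left, norm_smul, hu, mul_one, Real.norm_of_nonneg hδ.le]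
          linarith [hr' x ⟨hxS, hxu⟩]
      _ < r := by linarith [min_le_right (ε / 2) ((r - r') / 2)]
  · have hexp : dist (c + δ • u) x ^ 2 = dist c x ^ 2 - 2 * δ * ⟪x - c, u⟫ + δ ^ 2 := by
      rw [dist_eq_norm, dist_eq_norm, show c + δ • u - x = δ • u - (x - c) by abel,
        norm_sub_sq_real, norm_smul, hu, real_inner_smul_left, real_inner_comm, norm_sub_rev]
      simp only [Real.norm_eq_abs, mul_one, sq_abs]
      ring
    have hδε : δ ≤ ε / 2 := min_le_left _ _
    have hcx := hr x hxS
    have hr0 : 0 ≤ r := dist_nonneg.trans hcx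
    nlinarith [dist_nonneg (x := c + δ • u) (y := x), dist_nonneg (x := c) (y := x)]

lemma mem_closure_convexHull_farthest [CompleteSpace E] {S : Set E} (hS : IsCompact S)
    (hne : S.Nonempty) {c : E} (hc : ∀ c', farthestDist S c ≤ farthestDist S c') :
    c ∈ closure (convexHull ℝ {x ∈ S | dist c x = farthestDist S c}) := by
  set F := {x ∈ S | dist c x = farthestDist S c}
  have hF : F ⊆ closure (convexHull ℝ F) := (subset_convexHull ℝ F).trans subset_closure
  by_contra h
  obtain ⟨x, hxS, hx⟩ := hS.exists_dist_eq_farthestDist hne c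
  obtain ⟨u, ε, hu, hε, hsep⟩ := (convex_convexHull ℝ F).closure.exists_unit_separating
    isClosed_closure ⟨x, hF ⟨hxS, hx⟩⟩ h
  obtain ⟨c', hc'⟩ := exists_farthestDist_lt hS hne hu hε fun x hxS hx => hsep x (hF ⟨hxS, hx⟩)
  exact (hc c').not_gt hc'

section ConvexCombination

variable {ι : Type*} [Fintype ι]

lemma sum_mul_norm_sub_sq_eq (w : ι → ℝ) (hw : ∑ i, w i = 1) (z : ι → E) (c : E) :
    ∑ i, w i * ‖z i - c‖ ^ 2 =
      ‖∑ i, w i • z i - c‖ ^ 2 + (∑ i, ∑ j, w i * w j * ‖z i - z j‖ ^ 2) / 2 := by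
  set v := fun i => z i - c
  have hzv : ∀ i j, z i - z j = v i - v j := fun i j => (sub_sub_sub_cancel_right _ _ c).symm
  have hsum : ∑ i, w i • z i - c = ∑ i, w i • v i := by
    simp only [v, smul_sub, Finset.sum_sub_distrib, ← Finset.sum_smul, hw, one_smul]
  have hcross : ∑ i, ∑ j, w i * w j * ⟪v i, v j⟫ = ‖∑ i, w i • v i‖ ^ 2 := by
    rw [← real_inner_self_eq_norm_sq, sum_inner]
    simp only [inner_sum, real_inner_smul_left, real_inner_smul_right]
    exact Finset.sum_congr rfl fun i _ => Finset.sum_congr rfl fun j _ => by ring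
  have hpt : ∀ i j, w i * w j * ‖v i - v j‖ ^ 2 =
      w j * (w i * ‖v i‖ ^ 2) + w i * (w j * ‖v j‖ ^ 2) - 2 * (w i * w j * ⟪v i, v j⟫) := by
    intro i j
    rw [norm_sub_sq_real]
    ring
  change ∑ i, w i * ‖v i‖ ^ 2 = _
  simp only [hzv, hpt, hsum, Finset.sum_sub_distrib, Finset.sum_add_distrib, ← Finset.sum_mul,
    ← Finset.mul_sum, hw, hcross]
  ring

lemma card_mul_sq_sub_norm_sq_le {w : ι → ℝ} (hw0 : ∀ i, 0 ≤ w i) (hw1 : ∑ i, w i = 1)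
    {z : ι → E} {c : E} {r d : ℝ} (hr : ∀ i, dist (z i) c = r)
    (hd : ∀ i j, dist (z i) (z j) ≤ d) :
    2 * Fintype.card ι * (r ^ 2 - ‖∑ i, w i • z i - c‖ ^ 2) ≤ (Fintype.card ι - 1) * d ^ 2 := by
  classical
  have hvar := sum_mul_norm_sub_sq_eq w hw1 z c
  simp only [← dist_eq_norm, hr, ← Finset.sum_mul, hw1, one_mul] at hvar ⊢
  -- the diagonal terms of the double sum vanish, the others are at most `w i * w j * d ^ 2`
  have hpair : ∀ i j, w i * w j * dist (z i) (z j) ^ 2 ≤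
      w i * w j * d ^ 2 - if i = j then w i ^ 2 * d ^ 2 else 0 := by
    intro i j
    split_ifs with hij
    · subst hij
      apply le_of_eq
      simp only [dist_self]
      ring
    · have hd0 : 0 ≤ dist (z i) (z j) := dist_nonneg
      have := hd i j
      rw [sub_zero]
      exact mul_le_mul_of_nonneg_left (by nlinarith) (mul_nonneg (hw0 i) (hw0 j))
  have hdouble : ∑ i, ∑ j, w i * w j * dist (z i) (z j) ^ 2 ≤ d ^ 2 * (1 - ∑ i, w i ^ 2) := by
    calc _ ≤ ∑ i, ∑ j, (w i * w j * d ^ 2 - if i = j then w i ^ 2 * d ^ 2 else 0) :=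
          Finset.sum_le_sum fun i _ => Finset.sum_le_sum fun j _ => hpair i j
      _ = d ^ 2 * (1 - ∑ i, w i ^ 2) := by
          simp only [Finset.sum_sub_distrib, Finset.sum_ite_eq, Finset.mem_univ, if_true,
            ← Finset.sum_mul, ← Finset.mul_sum, hw1]
          ring
  have hcs : 1 ≤ Fintype.card ι * ∑ i, w i ^ 2 := by
    simpa [hw1] using sq_sum_le_card_mul_sum_sq (s := Finset.univ) (f := w)
  nlinarith [sq_nonneg d]

end ConvexCombination

lemma sq_farthestDist_le [FiniteDimensional ℝ E] {S : Set E} (hS : IsCompact S)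
    (hne : S.Nonempty) {d : ℝ} (hd : ∀ x ∈ S, ∀ y ∈ S, dist x y ≤ d) {c : E}
    (hc : ∀ c', farthestDist S c ≤ farthestDist S c') :
    farthestDist S c ^ 2 ≤ Module.finrank ℝ E / (2 * (Module.finrank ℝ E + 1)) * d ^ 2 := by
  refine le_of_forall_pos_le_add fun η hη => ?_
  obtain ⟨p, hp, hcp⟩ := Metric.mem_closure_iff.1 (mem_closure_convexHull_farthest hS hne hc)
    (√η) (Real.sqrt_pos.2 hη)
  obtain ⟨ι, _, z, w, hzF, hz, hw0, hw1, rfl⟩ := eq_pos_convex_span_of_mem_convexHull hp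
  have hm : (Fintype.card ι : ℝ) ≤ Module.finrank ℝ E + 1 := by
    exact_mod_cast hz.card_le_finrank_succ.trans (Nat.add_le_add_right (Submodule.finrank_le _) 1)
  set n : ℝ := (Module.finrank ℝ E : ℝ)
  set m : ℝ := (Fintype.card ι : ℝ)
  have hn : 0 ≤ n := Nat.cast_nonneg _
  have hm0 : 0 < m := Nat.cast_pos.2 <|
    Finset.card_pos.2 (Finset.nonempty_of_sum_ne_zero (hw1 ▸ one_ne_zero))
  have hbound := card_mul_sq_sub_norm_sq_le (fun i => (hw0 i).le) hw1
    (fun i => by rw [dist_comm]; exact (hzF (mem_range_self i)).2)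
    (fun i j => hd _ (hzF (mem_range_self i)).1 _ (hzF (mem_range_self j)).1)
  have hpc : ‖∑ i, w i • z i - c‖ ^ 2 ≤ η := by
    rw [← dist_eq_norm, dist_comm]
    nlinarith [Real.sq_sqrt hη.le, dist_nonneg (x := c) (y := ∑ i, w i • z i)]
  have hfrac : (m - 1) / (2 * m) ≤ n / (2 * (n + 1)) := by
    rw [div_le_div_iff₀ (by positivity) (by linarith)]
    nlinarith
  have hr : farthestDist S c ^ 2 - ‖∑ i, w i • z i - c‖ ^ 2 ≤ (m - 1) / (2 * m) * d ^ 2 := by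
    rw [div_mul_eq_mul_div, le_div_iff₀ (by positivity)]
    linarith
  nlinarith [mul_le_mul_of_nonneg_right hfrac (sq_nonneg d)]

theorem jung_theorem [FiniteDimensional ℝ E] {S : Set E} (hS : IsCompact S) {d : ℝ}
    (hd : ∀ x ∈ S, ∀ y ∈ S, dist x y ≤ d) :
    ∃ c, S ⊆ closedBall c (√(Module.finrank ℝ E / (2 * (Module.finrank ℝ E + 1))) * d) := by
  rcases S.eq_empty_or_nonempty with rfl | hne
  · exact ⟨0, empty_subset _⟩
  obtain ⟨c, hc⟩ := exists_forall_farthestDist_le hS.isBounded hne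
  obtain ⟨x₀, hx₀⟩ := hne
  have hd0 : 0 ≤ d := dist_self x₀ ▸ hd x₀ hx₀ x₀ hx₀
  have hr0 : 0 ≤ farthestDist S c := dist_nonneg.trans (dist_le_farthestDist hS.isBounded c hx₀)
  refine ⟨c, fun x hx => ?_⟩
  rw [mem_closedBall, dist_comm]
  calc dist c x ≤ farthestDist S c := dist_le_farthestDist hS.isBounded c hx
    _ = √(farthestDist S c ^ 2) := (Real.sqrt_sq hr0).symm
    _ ≤ √(Module.finrank ℝ E / (2 * (Module.finrank ℝ E + 1)) * d ^ 2) :=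
        Real.sqrt_le_sqrt (sq_farthestDist_le hS ⟨x₀, hx₀⟩ hd hc)
    _ = √(Module.finrank ℝ E / (2 * (Module.finrank ℝ E + 1))) * d := by
        rw [Real.sqrt_mul (by positivity), Real.sqrt_sq hd0]

end InnerProductSpace

section ConstantWidth

variable {K : Set Plane}

lemma HasConstantWidth1.inner_sub_le_one (hw : HasConstantWidth1 K) (hK : IsCompact K)
    {u x y : Plane} (hu : ‖u‖ = 1) (hx : x ∈ K) (hy : y ∈ K) : ⟪x - y, u⟫ ≤ 1 := by
  have himg := hK.image (show Continuous fun x : Plane => ⟪x, u⟫ by fun_prop)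
  rw [inner_sub_left, ← hw u hu]
  exact sub_le_sub (le_csSup himg.bddAbove (mem_image_of_mem _ hx))
    (csInf_le himg.bddBelow (mem_image_of_mem _ hy))

lemma HasConstantWidth1.exists_inner_sub_eq_one (hw : HasConstantWidth1 K) (hK : IsCompact K)
    (hne : K.Nonempty) {u : Plane} (hu : ‖u‖ = 1) : ∃ x ∈ K, ∃ y ∈ K, ⟪x - y, u⟫ = 1 := by
  have himg := hK.image (show Continuous fun x : Plane => ⟪x, u⟫ by fun_prop)
  obtain ⟨x, hx, hx_sup⟩ := himg.sSup_mem (hne.image _)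
  obtain ⟨y, hy, hy_inf⟩ := himg.sInf_mem (hne.image _)
  exact ⟨x, hx, y, hy, by rw [inner_sub_left, ← hw u hu, ← hx_sup, ← hy_inf]⟩

lemma HasConstantWidth1.dist_le_one (hw : HasConstantWidth1 K) (hK : IsCompact K) {x y : Plane}
    (hx : x ∈ K) (hy : y ∈ K) : dist x y ≤ 1 := by
  obtain ⟨u, hu, hxy⟩ := exists_norm_eq_one_inner_eq_norm (x - y)
  rw [dist_eq_norm, ← hxy]
  exact hw.inner_sub_le_one hK hu hx hy

lemma HasConstantWidth1.mem_of_forall_dist_le_one (hw : HasConstantWidth1 K) (hK : IsCompact K)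
    (hconv : Convex ℝ K) (hne : K.Nonempty) {y : Plane} (h : ∀ x ∈ K, dist x y ≤ 1) : y ∈ K := by
  by_contra hy
  obtain ⟨u, ε, hu, hε, hsep⟩ := hconv.exists_unit_separating hK.isClosed hne hy
  obtain ⟨x₁, hx₁, x₀, hx₀, hx₁x₀⟩ := hw.exists_inner_sub_eq_one hK hne hu
  have hx₁y : ⟪x₁ - y, u⟫ ≤ 1 := by
    calc ⟪x₁ - y, u⟫ ≤ ‖x₁ - y‖ * ‖u‖ := real_inner_le_norm _ _
      _ ≤ 1 := by rw [hu, mul_one, ← dist_eq_norm]; exact h x₁ hx₁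
  have hsplit : ⟪x₁ - y, u⟫ = ⟪x₁ - x₀, u⟫ + ⟪x₀ - y, u⟫ := by
    rw [← inner_add_left, sub_add_sub_cancel]
  linarith [hsep x₀ hx₀]

lemma HasConstantWidth1.closedBall_one_sub_subset (hw : HasConstantWidth1 K) (hK : IsCompact K)
    (hconv : Convex ℝ K) (hne : K.Nonempty) {c : Plane} {ρ : ℝ} (hρ : K ⊆ closedBall c ρ) :
    closedBall c (1 - ρ) ⊆ K := fun y hy =>
  hw.mem_of_forall_dist_le_one hK hconv hne fun x hx => calc
    dist x y ≤ dist x c + dist c y := dist_triangle _ _ _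
    _ ≤ ρ + (1 - ρ) := add_le_add (hρ hx) (by rwa [dist_comm, ← mem_closedBall])
    _ = 1 := by ring

end ConstantWidth

lemma le_inradius {K : Set Plane} (hK : Bornology.IsBounded K) {x : Plane} {r : ℝ} (hr : 0 ≤ r)
    (h : closedBall x r ⊆ K) : r ≤ inradius K := by
  obtain ⟨R, hR⟩ := hK.subset_closedBall x
  refine le_csSup ⟨R, ?_⟩ ⟨hr, x, h⟩
  rintro s ⟨hs, y, hy⟩
  linarith [dist_add_le_of_closedBall_subset hs (hy.trans hR), dist_nonneg (x := y) (y := x)]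

lemma inradius_iInter_closedBall {ι : Type*} [Fintype ι] [Nonempty ι] {v : ι → Plane} {c : Plane}
    {ρ s : ℝ} (hρs : ρ ≤ s) (hv : ∀ i, dist (v i) c = ρ) (hsum : ∑ i, (v i - c) = 0) :
    inradius (⋂ i, closedBall (v i) s) = s - ρ := by
  refine le_antisymm (Real.sSup_le ?_ (by linarith)) (le_inradius (x := c) ?_ (by linarith) ?_)
  · rintro r ⟨hr, x, hx⟩
    obtain ⟨i, hi⟩ := exists_le_dist_of_sum_sub_eq_zero hv hsum x
    linarith [dist_add_le_of_closedBall_subset hr (hx.trans (iInter_subset _ i))]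
  · exact isBounded_closedBall.subset (iInter_subset _ (Classical.arbitrary ι))
  · refine subset_iInter fun i y hy => ?_
    rw [mem_closedBall] at hy ⊢
    linarith [dist_triangle y c (v i), dist_comm c (v i), hv i]

lemma sq_sqrt_three_div_three : (√3 / 3) ^ 2 = 1 / 3 := by
  rw [div_pow, Real.sq_sqrt (by norm_num)]
  norm_num

lemma sqrt_three_div_three_le_one : √3 / 3 ≤ 1 := by
  nlinarith [sq_sqrt_three_div_three, Real.sqrt_nonneg 3]

def reuleauxVertex : Fin 3 → Plane := ![pt 0 0, pt 1 0, pt (1 / 2) (√3 / 2)]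

lemma reuleauxTriangle_eq_iInter : ReuleauxTriangle = ⋂ i, closedBall (reuleauxVertex i) 1 := by
  ext y
  simp [ReuleauxTriangle, Fin.forall_fin_succ, reuleauxVertex, and_assoc]

lemma dist_pt (a b a' b' : ℝ) : dist (pt a b) (pt a' b') = √((a - a') ^ 2 + (b - b') ^ 2) := by
  simp [EuclideanSpace.dist_eq, pt, Fin.sum_univ_two, Real.dist_eq]

lemma dist_reuleauxVertex (i : Fin 3) : dist (reuleauxVertex i) (pt (1 / 2) (√3 / 6)) = √3 / 3 := by
  have h3 : √3 ^ 2 = 3 := Real.sq_sqrt (by norm_num)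
  rw [← Real.sqrt_sq (by positivity : 0 ≤ √3 / 3)]
  fin_cases i <;> simp [reuleauxVertex, dist_pt] <;> congr 1 <;> linarith [h3]

lemma sum_reuleauxVertex_sub : ∑ i, (reuleauxVertex i - pt (1 / 2) (√3 / 6)) = 0 := by
  ext k
  fin_cases k <;> simp [reuleauxVertex, pt, Fin.sum_univ_three] <;> ring

lemma inradius_reuleauxTriangle : inradius ReuleauxTriangle = 1 - √3 / 3 := by
  rw [reuleauxTriangle_eq_iInter]
  exact inradius_iInter_closedBall sqrt_three_div_three_le_one dist_reuleauxVertex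
    sum_reuleauxVertex_sub

/-- The Reuleaux triangle minimizes the inradius among planar convex bodies of
constant width 1: every such body has inradius at least `1 − √3/3`, and the
Reuleaux triangle has inradius exactly `1 − √3/3`. -/
theorem reuleaux_minimizes_inradius :
    (∀ Ω : Set Plane, IsConvexBody Ω → HasConstantWidth1 Ω →
      1 - Real.sqrt 3 / 3 ≤ inradius Ω) ∧
    inradius ReuleauxTriangle = 1 - Real.sqrt 3 / 3 := by
  refine ⟨fun Ω ⟨hK, hconv, hint⟩ hw => ?_, inradius_reuleauxTriangle⟩
  obtain ⟨c, hc⟩ := jung_theorem hK fun x hx y hy => hw.dist_le_one hK hx hy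
  have hradius : √(2 / (2 * (2 + 1))) * 1 = √3 / 3 := by
    rw [mul_one, ← Real.sqrt_sq (by positivity : 0 ≤ √3 / 3), sq_sqrt_three_div_three]
    norm_num
  rw [finrank_euclideanSpace_fin, Nat.cast_ofNat, hradius] at hc
  exact le_inradius hK.isBounded (by linarith [sqrt_three_div_three_le_one])
    (hw.closedBall_one_sub_subset hK hconv (hint.mono interior_subset) hc)
end
end
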